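/- Let T' be a (q+1)-regular tree and form T by attaching, at every vertex of T', q^f − q new edges, and to each new vertex a rooted tree in which every vertex has q^f children. Then T is a (q^f+1)-regular tree, the inclusion T' ↪ T is an isometric embedding of graph metrics, and the ball of radius R in T intersected with T' equals the ball of radius R in T'. -/

import Mathlib

/-!
Each new vertex hangs below a unique vertex of `T'`, its base. Sending every vertex of `T` to
its base maps adjacent vertices to equal or adjacent ones, so it does not increase distances;
together with the inclusion this makes `T' ↪ T` isometric, and the statement about balls follows.
On a cycle of `T`, a vertex of greatest height above `T'` has two distinct cycle neighbours of no
greater height, whereas a new vertex has only one such neighbour, its parent; so a cycle would lie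
in `T'`. The degrees are `(q + 1) + (q ^ f - q)` on `T'` and `1 + q ^ f` off it. Finally, a
connected locally finite graph is countable, so `T` can be built in `Type`.
-/

open Function

namespace SimpleGraph

section General

variable {V W : Type*} {G : SimpleGraph V} {H : SimpleGraph W}

theorem edist_le_edist_of_adj_or_eq (f : V → W)
    (hf : ∀ ⦃a b⦄, G.Adj a b → f a = f b ∨ H.Adj (f a) (f b)) (u v : V) :
    H.edist (f u) (f v) ≤ G.edist u v := by
  suffices h : ∀ {u v : V} (p : G.Walk u v), H.edist (f u) (f v) ≤ p.length from
    le_iInf fun p => h p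
  intro u v p
  induction p with
  | nil => simp
  | @cons a b c hab p ih =>
    calc H.edist (f a) (f c) ≤ H.edist (f a) (f b) + H.edist (f b) (f c) := H.edist_triangle
      _ ≤ 1 + p.length := by
        gcongr
        rw [edist_le_one_iff_adj_or_eq]
        exact (hf hab).symm
      _ = (Walk.cons hab p).length := by rw [Walk.length_cons]; push_cast; ring

theorem Iso.edist_eq (φ : G ≃g H) (u v : V) : H.edist (φ u) (φ v) = G.edist u v := by
  refine le_antisymm
    (edist_le_edist_of_adj_or_eq φ (fun _ _ h => Or.inr (φ.map_adj_iff.2 h)) u v) ?_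
  simpa using edist_le_edist_of_adj_or_eq φ.symm
    (fun _ _ h => Or.inr (φ.symm.map_adj_iff.2 h)) (φ u) (φ v)

theorem Iso.dist_eq (φ : G ≃g H) (u v : V) : H.dist (φ u) (φ v) = G.dist u v := by
  rw [dist, dist, φ.edist_eq]

theorem Iso.ncard_neighborSet (φ : G ≃g H) (v : V) :
    (H.neighborSet (φ v)).ncard = (G.neighborSet v).ncard := by
  rw [← Set.ncard_image_of_injective _ φ.injective, Iso.image_neighborSet]

theorem countable_setOf_walk_length_eq (hG : ∀ v, (G.neighborSet v).Countable) (n : ℕ) (v : V) :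
    {w | ∃ p : G.Walk v w, p.length = n}.Countable := by
  induction n generalizing v with
  | zero =>
    refine (Set.countable_singleton v).mono ?_
    rintro w ⟨p, hp⟩
    exact (Walk.eq_of_length_eq_zero hp).symm
  | succ n ih =>
    refine ((hG v).biUnion fun a _ => ih a).mono ?_
    rintro w ⟨_ | ⟨hva, p⟩, hp⟩
    · simp at hp
    · exact Set.mem_biUnion hva ⟨p, by simpa using hp⟩

theorem Preconnected.countable (hG : G.Preconnected) (hN : ∀ v, (G.neighborSet v).Countable) :
    Countable V := by
  rcases isEmpty_or_nonempty V with hV | ⟨⟨v₀⟩⟩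
  · infer_instance
  refine Set.countable_univ_iff.mp ((Set.countable_iUnion fun n =>
    countable_setOf_walk_length_eq hN n v₀).mono fun w _ => ?_)
  obtain ⟨p⟩ := hG v₀ w
  exact Set.mem_iUnion.2 ⟨p.length, p, rfl⟩

theorem Walk.IsCycle.forall_mem_support_eq_zero {u : V} {c : G.Walk u u} (hc : c.IsCycle)
    (d : V → ℕ) (hd : ∀ ⦃x y z⦄, 0 < d x → G.Adj x y → G.Adj x z → d y ≤ d x → d z ≤ d x → y = z) :
    ∀ x ∈ c.support, d x = 0 := by
  obtain ⟨z, hz, hmax⟩ := Set.exists_max_image {x | x ∈ c.support} d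
    c.support.finite_toSet ⟨u, c.start_mem_support⟩
  suffices d z = 0 from fun x hx => by have := hmax x hx; omega
  by_contra hzpos
  classical
  have hc' := hc.rotate hz
  have hnil : ¬ (c.rotate z hz).Nil := hc'.not_nil
  have hmax' : ∀ x ∈ (c.rotate z hz).support, d x ≤ d z := fun x hx =>
    hmax x ((c.mem_support_rotate_iff z hz).1 hx)
  refine hc'.snd_ne_penultimate (hd (Nat.pos_of_ne_zero hzpos) (Walk.adj_snd hnil)
    (Walk.adj_penultimate hnil).symm (hmax' _ ?_) (hmax' _ ?_))
  · exact List.mem_of_mem_tail (Walk.snd_mem_tail_support hnil)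
  · exact List.mem_of_mem_dropLast (Walk.penultimate_mem_dropLast_support hnil)

theorem IsAcyclic.exists_mem_support_notMem_range (hG : G.IsAcyclic) (f : G ↪g H) {u : W}
    {c : H.Walk u u} (hc : c.IsCycle) : ∃ x ∈ c.support, x ∉ Set.range f := by
  by_contra! h
  let ι := Embedding.induce (G := H) (Set.range f)
  refine f.isoInduceRange.isAcyclic_iff.mp hG (c.induce _ h) ?_
  rw [← Walk.isCycle_map_iff_of_injective (f := ι.toHom) ι.injective, Walk.map_induce]
  exact hc

end General

variable {W : Type*} {G : SimpleGraph W} {m k : ℕ}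

namespace AttachTrees

def parent : W × Fin m × List (Fin k) → W ⊕ W × Fin m × List (Fin k)
  | (v, _, []) => .inl v
  | (v, i, _ :: s) => .inr (v, i, s)

def height : W ⊕ W × Fin m × List (Fin k) → ℕ
  | .inl _ => 0
  | .inr (_, _, s) => s.length + 1

def base : W ⊕ W × Fin m × List (Fin k) → W
  | .inl v => v
  | .inr (v, _, _) => v

lemma height_parent (p : W × Fin m × List (Fin k)) : height (parent p) + 1 = height (.inr p) := by
  obtain ⟨v, i, _ | ⟨a, s⟩⟩ := p <;> rfl

lemma base_parent (p : W × Fin m × List (Fin k)) : base (parent p) = p.1 := by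
  obtain ⟨v, i, _ | ⟨a, s⟩⟩ := p <;> rfl

lemma parent_eq_inl_iff {p : W × Fin m × List (Fin k)} {u : W} :
    parent p = .inl u ↔ p.1 = u ∧ p.2.2 = [] := by
  obtain ⟨v, i, _ | ⟨a, s⟩⟩ := p <;> simp [parent]

lemma parent_eq_inr_iff {p q : W × Fin m × List (Fin k)} :
    parent p = .inr q ↔ ∃ a, p = (q.1, q.2.1, a :: q.2.2) := by
  obtain ⟨v, i, _ | ⟨a, s⟩⟩ := p <;> obtain ⟨w, j, t⟩ := q <;> simp [parent, eq_comm]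

end AttachTrees

open AttachTrees

/-- `.inr (v, i, s)` is the vertex at address `s` in the `i`-th tree attached at `v`; its parent
is `.inr (v, i, s.tail)`, or `.inl v` when `s = []`. -/
def attachTrees (G : SimpleGraph W) (m k : ℕ) : SimpleGraph (W ⊕ W × Fin m × List (Fin k)) where
  Adj
    | .inl u, .inl w => G.Adj u w
    | .inl u, .inr p => parent p = .inl u
    | .inr p, .inl w => parent p = .inl w
    | .inr p, .inr q => parent p = .inr q ∨ parent q = .inr p
  symm := ⟨by
    rintro (u | p) (w | q) h
    exacts [h.symm, h, h, h.symm]⟩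
  loopless := ⟨by
    rintro (u | p) h
    · exact G.loopless.irrefl u h
    · have := height_parent p
      rcases h with h | h <;> rw [h] at this <;> omega⟩

@[simp] lemma attachTrees_adj_inl_inl {u w : W} :
    (G.attachTrees m k).Adj (.inl u) (.inl w) ↔ G.Adj u w := Iff.rfl

lemma neighborSet_attachTrees_inl (u : W) :
    (G.attachTrees m k).neighborSet (.inl u) =
      .inl '' G.neighborSet u ∪ Set.range fun i : Fin m => .inr (u, i, []) := by
  ext (w | ⟨v, i, s⟩)
  · simp
  · simp [attachTrees, parent_eq_inl_iff, @eq_comm _ v]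

lemma neighborSet_attachTrees_inr (p : W × Fin m × List (Fin k)) :
    (G.attachTrees m k).neighborSet (.inr p) =
      insert (parent p) (Set.range fun a : Fin k => .inr (p.1, p.2.1, a :: p.2.2)) := by
  ext (w | q)
  · simp [attachTrees, eq_comm]
  · simp [attachTrees, parent_eq_inr_iff, @eq_comm _ (Sum.inr q), @eq_comm _ _ q]

lemma attachTrees_adj_parent (p : W × Fin m × List (Fin k)) :
    (G.attachTrees m k).Adj (.inr p) (parent p) := by
  rw [← mem_neighborSet, neighborSet_attachTrees_inr]
  exact Set.mem_insert _ _

variable (G m k) in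
def inlEmbedding : G ↪g G.attachTrees m k where
  toEmbedding := .inl
  map_rel_iff' := Iff.rfl

lemma reachable_inl_base (x : W ⊕ W × Fin m × List (Fin k)) :
    (G.attachTrees m k).Reachable (.inl (base x)) x := by
  obtain u | ⟨v, i, s⟩ := x
  · rfl
  induction s with
  | nil => exact (attachTrees_adj_parent (v, i, [])).symm.reachable
  | cons a s ih => exact ih.trans (attachTrees_adj_parent (v, i, a :: s)).symm.reachable

theorem Connected.attachTrees (hG : G.Connected) : (G.attachTrees m k).Connected := by
  have : Nonempty W := hG.nonempty
  refine (connected_iff _).2 ⟨fun x y => ?_, inferInstance⟩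
  exact (reachable_inl_base x).symm.trans
    (((hG.preconnected _ _).map (inlEmbedding G m k).toHom).trans (reachable_inl_base y))

lemma eq_parent_of_adj_of_height_le {p : W × Fin m × List (Fin k)}
    {y : W ⊕ W × Fin m × List (Fin k)} (hadj : (G.attachTrees m k).Adj (.inr p) y)
    (hy : height y ≤ height (.inr p)) : y = parent p := by
  rw [← mem_neighborSet, neighborSet_attachTrees_inr] at hadj
  obtain rfl | ⟨a, rfl⟩ := hadj
  · rfl
  · simp [height] at hy

theorem IsAcyclic.attachTrees (hG : G.IsAcyclic) : (G.attachTrees m k).IsAcyclic := by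
  intro u c hc
  obtain ⟨x, hx, hx_base⟩ := hG.exists_mem_support_notMem_range (inlEmbedding G m k) hc
  have hunique : ∀ ⦃x y z⦄, 0 < height x → (G.attachTrees m k).Adj x y →
      (G.attachTrees m k).Adj x z → height y ≤ height x → height z ≤ height x → y = z := by
    rintro (_ | p) y z hpos hy hz hyle hzle
    · simp [height] at hpos
    · rw [eq_parent_of_adj_of_height_le hy hyle, eq_parent_of_adj_of_height_le hz hzle]
  have := hc.forall_mem_support_eq_zero height hunique x hx
  obtain w | p := x
  · exact hx_base ⟨w, rfl⟩
  · simp [height] at this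

lemma base_eq_or_adj_of_adj {x y : W ⊕ W × Fin m × List (Fin k)}
    (h : (G.attachTrees m k).Adj x y) : base x = base y ∨ G.Adj (base x) (base y) := by
  rw [← mem_neighborSet] at h
  obtain u | p := x
  · rw [neighborSet_attachTrees_inl] at h
    obtain ⟨w, hw, rfl⟩ | ⟨i, rfl⟩ := h
    exacts [Or.inr hw, Or.inl rfl]
  · rw [neighborSet_attachTrees_inr] at h
    obtain rfl | ⟨a, rfl⟩ := h
    exacts [Or.inl (base_parent p).symm, Or.inl rfl]

theorem edist_attachTrees_inl (u v : W) :
    (G.attachTrees m k).edist (.inl u) (.inl v) = G.edist u v :=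
  le_antisymm
    (edist_le_edist_of_adj_or_eq (inlEmbedding G m k) (fun _ _ h => Or.inr h) u v)
    (edist_le_edist_of_adj_or_eq base (fun _ _ => base_eq_or_adj_of_adj) (.inl u) (.inl v))

theorem dist_attachTrees_inl (u v : W) :
    (G.attachTrees m k).dist (.inl u) (.inl v) = G.dist u v := by
  rw [dist, dist, edist_attachTrees_inl]

theorem ncard_neighborSet_attachTrees_inl {u : W} (hu : (G.neighborSet u).Finite) :
    ((G.attachTrees m k).neighborSet (.inl u)).ncard = (G.neighborSet u).ncard + m := by
  have hinj : Injective fun i : Fin m => (.inr (u, i, []) : W ⊕ W × Fin m × List (Fin k)) :=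
    fun i j h => by simpa using h
  rw [neighborSet_attachTrees_inl, Set.ncard_union_eq ?_ (hu.image _) (Set.finite_range _),
    Set.ncard_image_of_injective _ Sum.inl_injective, Set.ncard_range_of_injective hinj,
    Nat.card_fin]
  refine Set.disjoint_left.2 ?_
  rintro _ ⟨w, -, rfl⟩ ⟨i, hi⟩
  simp at hi

theorem ncard_neighborSet_attachTrees_inr (p : W × Fin m × List (Fin k)) :
    ((G.attachTrees m k).neighborSet (.inr p)).ncard = k + 1 := by
  have hinj : Injective fun a : Fin k =>
      (.inr (p.1, p.2.1, a :: p.2.2) : W ⊕ W × Fin m × List (Fin k)) :=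
    fun a b h => by simpa using h
  rw [neighborSet_attachTrees_inr, Set.ncard_insert_of_notMem ?_ (Set.finite_range _),
    Set.ncard_range_of_injective hinj, Nat.card_fin]
  rintro ⟨a, ha : .inr (p.1, p.2.1, a :: p.2.2) = parent p⟩
  have hchild : height (.inr (p.1, p.2.1, a :: p.2.2) : W ⊕ W × Fin m × List (Fin k)) =
      height (.inr p) + 1 := rfl
  have := height_parent p
  rw [ha] at hchild
  omega

end SimpleGraph

open SimpleGraph in
theorem unramified_tree_extension_general
    {V' : Type*} (T' : SimpleGraph V') (hconn : T'.Connected) (hacyc : T'.IsAcyclic)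
    (q f : ℕ) (hf : 1 ≤ f)
    (hreg : ∀ v : V', (T'.neighborSet v).ncard = q + 1) :
    ∃ (V : Type) (T : SimpleGraph V) (ι : V' → V),
      Function.Injective ι ∧ T.Connected ∧ T.IsAcyclic ∧
      (∀ v : V, (T.neighborSet v).ncard = q ^ f + 1) ∧
      (∀ u v : V', T.dist (ι u) (ι v) = T'.dist u v) ∧
      (∀ (x : V') (R : ℕ),
        ι ⁻¹' {y : V | T.dist (ι x) y ≤ R} = {y : V' | T'.dist x y ≤ R}) := by
  have hfin (v : V') : (T'.neighborSet v).Finite := Set.finite_of_ncard_pos (by rw [hreg]; omega)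
  have : Countable V' := hconn.preconnected.countable fun v => (hfin v).countable
  let e : Shrink.{0} V' ≃ V' := (equivShrink.{0} V').symm
  let φ : T'.comap e ≃g T' := Iso.comap e T'
  let T := (T'.comap e).attachTrees (q ^ f - q) (q ^ f)
  have hdist (u v : V') : T.dist (.inl (e.symm u)) (.inl (e.symm v)) = T'.dist u v := by
    rw [dist_attachTrees_inl, ← φ.dist_eq]
    simp [φ]
  refine ⟨_, T, fun v => .inl (e.symm v), Sum.inl_injective.comp e.symm.injective,
    ((Iso.connected_iff φ).2 hconn).attachTrees, (hacyc.comap φ.toHom φ.injective).attachTrees,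
    ?_, hdist, fun x R => Set.ext fun y => by simp [hdist]⟩
  rintro (u | p)
  · have hdeg : ((T'.comap e).neighborSet u).ncard = q + 1 := by
      rw [← φ.ncard_neighborSet, hreg]
    have hq : q ≤ q ^ f := Nat.le_self_pow (by omega) q
    rw [ncard_neighborSet_attachTrees_inl (Set.finite_of_ncard_pos (by omega)), hdeg]
    omega
  · exact ncard_neighborSet_attachTrees_inr p

/-- Attaching `q^f − q` new edges at every vertex of a `(q+1)`-regular tree `T'`, and
rooted `q^f`-ary trees beyond them, yields a `(q^f+1)`-regular tree `T`: there exist a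
tree `T` and an injection `ι` of the vertices of `T'` into those of `T` such that `T`
is a connected acyclic `(q^f+1)`-regular graph, `ι` is an isometric embedding for the
graph metrics, and the ball of radius `R` in `T` intersected with (the image of) `T'`
is exactly the ball of radius `R` in `T'`. -/
theorem unramified_tree_extension
    {V' : Type*} (T' : SimpleGraph V') (hconn : T'.Connected) (hacyc : T'.IsAcyclic)
    (q f : ℕ) (hq : 2 ≤ q) (hf : 1 ≤ f)
    (hreg : ∀ v : V', (T'.neighborSet v).ncard = q + 1) :
    ∃ (V : Type) (T : SimpleGraph V) (ι : V' → V),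
      Function.Injective ι ∧ T.Connected ∧ T.IsAcyclic ∧
      (∀ v : V, (T.neighborSet v).ncard = q ^ f + 1) ∧
      (∀ u v : V', T.dist (ι u) (ι v) = T'.dist u v) ∧
      (∀ (x : V') (R : ℕ),
        ι ⁻¹' {y : V | T.dist (ι x) y ≤ R} = {y : V' | T'.dist x y ≤ R}) :=
  unramified_tree_extension_general T' hconn hacyc q f hf hreg
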